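/- Let A, C, B be three consecutive intervals on a chain (C separating A and B). For a stabilizer state with clipped-gauge generators S, the conditional mutual information I(A:B|C) := S_{AC} + S_{BC} - S_{ABC} - S_C equals the number of generators g ∈ S with left endpoint in A and right endpoint in B. -/
import Mathlib


/-!
STATEMENT 2: Let A, C, B be three consecutive intervals on a chain (C separating A and
B).  For a stabilizer state with clipped-gauge generators S, the conditional mutual
information I(A:B|C) := S_{AC} + S_{BC} - S_{ABC} - S_C equals the number of generators
g ∈ S with left endpoint in A and right endpoint in B.

Per the context, the entropy of each contiguous region X (AC, BC, ABC, C are all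
intervals) is computed by the clipped-gauge formula S_X = |X| - #{g ∈ S : supp(g) ⊆ X}.
Generators are modelled by their Pauli content: a map Fin L → Fin 4 (0 = identity).
-/

open scoped Classical

namespace Stmt2

/-- Support of a Pauli string. -/
def supp {L : ℕ} (f : Fin L → Fin 4) : Finset (Fin L) :=
  Finset.univ.filter fun i => f i ≠ 0

/-- `i` is the left endpoint l(g) of the Pauli string `f`. -/
def isLeftEnd {L : ℕ} (f : Fin L → Fin 4) (i : Fin L) : Prop :=
  f i ≠ 0 ∧ ∀ k, f k ≠ 0 → i ≤ k

/-- `i` is the right endpoint r(g) of the Pauli string `f`. -/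
def isRightEnd {L : ℕ} (f : Fin L → Fin 4) (i : Fin L) : Prop :=
  f i ≠ 0 ∧ ∀ k, f k ≠ 0 → k ≤ i

/-- The generating set (indexed by Fin m) is in the clipped gauge. -/
def ClippedGauge {L m : ℕ} (gen : Fin m → (Fin L → Fin 4)) : Prop :=
  (∀ i : Fin L,
      (Finset.univ.filter fun j => isLeftEnd (gen j) i).card
        + (Finset.univ.filter fun j => isRightEnd (gen j) i).card ≤ 2) ∧
  (∀ i : Fin L, ∀ j k, j ≠ k → isLeftEnd (gen j) i → isLeftEnd (gen k) i →
      gen j i ≠ gen k i) ∧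
  (∀ i : Fin L, ∀ j k, j ≠ k → isRightEnd (gen j) i → isRightEnd (gen k) i →
      gen j i ≠ gen k i)

/-- Clipped-gauge entropy formula for a contiguous region X:
S_X = |X| - #{g ∈ S : supp(g) ⊆ X}. -/
noncomputable def Sent {L m : ℕ} (gen : Fin m → (Fin L → Fin 4)) (X : Finset (Fin L)) : ℝ :=
  (X.card : ℝ) - (Finset.univ.filter fun j => supp (gen j) ⊆ X).card

set_option linter.unusedVariables false

lemma leftEnd_iff_min {L : ℕ} (f : Fin L → Fin 4) (h : (supp f).Nonempty) (i : Fin L) :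
    isLeftEnd f i ↔ i = (supp f).min' h := by
  constructor
  · rintro ⟨h1, h2⟩
    refine le_antisymm (h2 _ ?_) (Finset.min'_le _ _ (by simp [supp, h1]))
    have := (supp f).min'_mem h
    simpa [supp] using this
  · rintro rfl
    have hm := (supp f).min'_mem h
    simp only [supp, Finset.mem_filter, Finset.mem_univ, true_and] at hm
    exact ⟨hm, fun k hk => Finset.min'_le _ _ (by simp [supp, hk])⟩

lemma rightEnd_iff_max {L : ℕ} (f : Fin L → Fin 4) (h : (supp f).Nonempty) (i : Fin L) :
    isRightEnd f i ↔ i = (supp f).max' h := by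
  constructor
  · rintro ⟨h1, h2⟩
    refine le_antisymm (Finset.le_max' _ _ (by simp [supp, h1])) (h2 _ ?_)
    have := (supp f).max'_mem h
    simpa [supp] using this
  · rintro rfl
    have hm := (supp f).max'_mem h
    simp only [supp, Finset.mem_filter, Finset.mem_univ, true_and] at hm
    exact ⟨hm, fun k hk => Finset.le_max' _ _ (by simp [supp, hk])⟩

lemma supp_subset_Icc {L : ℕ} (f : Fin L → Fin 4) (h : (supp f).Nonempty) (x y : Fin L) :
    supp f ⊆ Finset.Icc x y ↔ x ≤ (supp f).min' h ∧ (supp f).max' h ≤ y := by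
  constructor
  · intro hs
    have h1 := hs ((supp f).min'_mem h)
    have h2 := hs ((supp f).max'_mem h)
    rw [Finset.mem_Icc] at h1 h2
    exact ⟨h1.1, h2.2⟩
  · rintro ⟨h1, h2⟩ i hi
    rw [Finset.mem_Icc]
    exact ⟨h1.trans (Finset.min'_le _ _ hi), (Finset.le_max' _ _ hi).trans h2⟩

lemma supp_subset_Ioc {L : ℕ} (f : Fin L → Fin 4) (h : (supp f).Nonempty) (x y : Fin L) :
    supp f ⊆ Finset.Ioc x y ↔ x < (supp f).min' h ∧ (supp f).max' h ≤ y := by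
  constructor
  · intro hs
    have h1 := hs ((supp f).min'_mem h)
    have h2 := hs ((supp f).max'_mem h)
    rw [Finset.mem_Ioc] at h1 h2
    exact ⟨h1.1, h2.2⟩
  · rintro ⟨h1, h2⟩ i hi
    rw [Finset.mem_Ioc]
    exact ⟨h1.trans_le (Finset.min'_le _ _ hi), (Finset.le_max' _ _ hi).trans h2⟩

theorem conditional_mutual_information_counts_spanning_generators {L m : ℕ}
    (gen : Fin m → (Fin L → Fin 4)) (hclip : ClippedGauge gen)
    (a b c d : Fin L) (hab : a ≤ b) (hbc : b < c) (hcd : c < d)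
    (A C B : Finset (Fin L))
    (hA : A = Finset.Icc a b) (hC : C = Finset.Ioc b c) (hB : B = Finset.Ioc c d) :
    Sent gen (A ∪ C) + Sent gen (B ∪ C) - Sent gen (A ∪ C ∪ B) - Sent gen C
      = (Finset.univ.filter fun j =>
          (∃ i ∈ A, isLeftEnd (gen j) i) ∧ (∃ i ∈ B, isRightEnd (gen j) i)).card := by
  subst hA hC hB
  have hab' : a.val ≤ b.val := hab
  have hbc' : b.val < c.val := hbc
  have hcd' : c.val < d.val := hcd
  have hAC : Finset.Icc a b ∪ Finset.Ioc b c = Finset.Icc a c := by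
    ext i
    simp only [Finset.mem_union, Finset.mem_Icc, Finset.mem_Ioc, Fin.le_def, Fin.lt_def]
    omega
  have hBC : Finset.Ioc c d ∪ Finset.Ioc b c = Finset.Ioc b d := by
    ext i
    simp only [Finset.mem_union, Finset.mem_Ioc, Fin.le_def, Fin.lt_def]
    omega
  have hABC : Finset.Icc a b ∪ Finset.Ioc b c ∪ Finset.Ioc c d = Finset.Icc a d := by
    ext i
    simp only [Finset.mem_union, Finset.mem_Icc, Finset.mem_Ioc, Fin.le_def, Fin.lt_def]
    omega
  rw [hABC, hAC, hBC]
  -- cardinalities of the regions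
  have hcards : (Finset.Icc a c).card + (Finset.Ioc b d).card
      = (Finset.Icc a d).card + (Finset.Ioc b c).card := by
    simp only [Fin.card_Icc, Fin.card_Ioc]
    omega
  -- the key counting identity
  have key : (Finset.univ.filter fun j => supp (gen j) ⊆ Finset.Icc a d).card
      + (Finset.univ.filter fun j => supp (gen j) ⊆ Finset.Ioc b c).card
      = (Finset.univ.filter fun j => supp (gen j) ⊆ Finset.Icc a c).card
      + (Finset.univ.filter fun j => supp (gen j) ⊆ Finset.Ioc b d).card
      + (Finset.univ.filter fun j =>
          (∃ i ∈ Finset.Icc a b, isLeftEnd (gen j) i)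
            ∧ (∃ i ∈ Finset.Ioc c d, isRightEnd (gen j) i)).card := by
    simp only [Finset.card_filter]
    rw [← Finset.sum_add_distrib, ← Finset.sum_add_distrib, ← Finset.sum_add_distrib]
    refine Finset.sum_congr rfl fun j _ => ?_
    by_cases h : (supp (gen j)).Nonempty
    · set l := (supp (gen j)).min' h with hl
      set r := (supp (gen j)).max' h with hr
      have hlr : l ≤ r := Finset.min'_le _ _ ((supp (gen j)).max'_mem h)
      have hspan : ((∃ i ∈ Finset.Icc a b, isLeftEnd (gen j) i)
          ∧ (∃ i ∈ Finset.Ioc c d, isRightEnd (gen j) i))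
          ↔ ((a ≤ l ∧ l ≤ b) ∧ (c < r ∧ r ≤ d)) := by
        constructor
        · rintro ⟨⟨i1, hi1, he1⟩, ⟨i2, hi2, he2⟩⟩
          rw [leftEnd_iff_min _ h] at he1
          rw [rightEnd_iff_max _ h] at he2
          subst he1; subst he2
          rw [Finset.mem_Icc] at hi1
          rw [Finset.mem_Ioc] at hi2
          exact ⟨hi1, hi2⟩
        · rintro ⟨h1, h2⟩
          exact ⟨⟨l, Finset.mem_Icc.mpr h1, (leftEnd_iff_min _ h l).mpr rfl⟩,
                 ⟨r, Finset.mem_Ioc.mpr h2, (rightEnd_iff_max _ h r).mpr rfl⟩⟩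
      simp only [supp_subset_Icc _ h, supp_subset_Ioc _ h, hspan, Fin.le_def, Fin.lt_def,
        ← hl, ← hr]
      have hlr' : l.val ≤ r.val := hlr
      split_ifs <;> omega
    · rw [Finset.not_nonempty_iff_eq_empty] at h
      have hsub : ∀ X : Finset (Fin L), supp (gen j) ⊆ X := by
        intro X; rw [h]; exact Finset.empty_subset X
      have hnospan : ¬ ((∃ i ∈ Finset.Icc a b, isLeftEnd (gen j) i)
          ∧ (∃ i ∈ Finset.Ioc c d, isRightEnd (gen j) i)) := by
        rintro ⟨⟨i1, _, he1, _⟩, _⟩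
        have : i1 ∈ supp (gen j) := by simp [supp, he1]
        simp [h] at this
      rw [if_pos (hsub _), if_pos (hsub _), if_pos (hsub _), if_pos (hsub _),
        if_neg hnospan]
  simp only [Sent]
  have key' : ((Finset.univ.filter fun j => supp (gen j) ⊆ Finset.Icc a d).card : ℝ)
      + (Finset.univ.filter fun j => supp (gen j) ⊆ Finset.Ioc b c).card
      = (Finset.univ.filter fun j => supp (gen j) ⊆ Finset.Icc a c).card
      + (Finset.univ.filter fun j => supp (gen j) ⊆ Finset.Ioc b d).card
      + (Finset.univ.filter fun j =>
          (∃ i ∈ Finset.Icc a b, isLeftEnd (gen j) i)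
            ∧ (∃ i ∈ Finset.Ioc c d, isRightEnd (gen j) i)).card := by
    exact_mod_cast congrArg (Nat.cast : ℕ → ℝ) key
  have hcards' : ((Finset.Icc a c).card : ℝ) + (Finset.Ioc b d).card
      = (Finset.Icc a d).card + (Finset.Ioc b c).card := by
    exact_mod_cast congrArg (Nat.cast : ℕ → ℝ) hcards
  linarith


end Stmt2
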